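/- Let p ≡ 1 (mod 4) be a prime and O_{F₂} = O_F ⊗ ℤ₂ for F = ℚ(√p), with A₂ = ℤ₂[√p] ⊂ O_{F₂} of index 2. Let 𝒪₄ ⊗ ℤ₂ = {(a b; c d) ∈ Mat₂(O_{F₂}) : b ∈ 2O_{F₂}} and 𝒪₈ ⊗ ℤ₂ = {(a b; c d) ∈ 𝒪₄ ⊗ ℤ₂ : a ∈ A₂}. Then (𝒪₈ ⊗ ℤ₂)¹ is a normal subgroup of (𝒪₄ ⊗ ℤ₂)¹, and if p ≡ 5 (mod 8) (so that O_{F₂}/2O_{F₂} ≅ 𝔽₄), the quotient (𝒪₄ ⊗ ℤ₂)¹ / (𝒪₈ ⊗ ℤ₂)¹ is isomorphic to 𝔽₄^× (cyclic of order 3), via (a b; c d) ↦ a mod 2O_{F₂}. -/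

import Mathlib

open Matrix

/-- The group `(𝒪₄ ⊗ ℤ₂)¹`: elements of `SL₂(R)` whose upper-right entry is
divisible by 2. -/
def sl2UpperDiv (R : Type) [CommRing R] : Subgroup (Matrix.SpecialLinearGroup (Fin 2) R) where
  carrier := {g | (2 : R) ∣ g.1 0 1}
  one_mem' := by
    simp only [Set.mem_setOf_eq, Matrix.SpecialLinearGroup.coe_one]
    rw [Matrix.one_apply_ne (by decide)]
    exact dvd_zero 2
  mul_mem' := by
    intro a b ha hb
    simp only [Set.mem_setOf_eq, Matrix.SpecialLinearGroup.coe_mul] at *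
    rw [Matrix.mul_apply, Fin.sum_univ_two]
    exact dvd_add (hb.mul_left _) (ha.mul_right _)
  inv_mem' := by
    intro a ha
    simp only [Set.mem_setOf_eq] at *
    have h : (a⁻¹).1 = adjugate a.1 := Matrix.SpecialLinearGroup.coe_inv a
    rw [h, Matrix.adjugate_fin_two]
    simpa using ha.neg_right

/-- The group `(𝒪₈ ⊗ ℤ₂)¹`: elements of `SL₂(R)` whose upper-right entry is divisible
by 2 and whose upper-left entry lies in `A₂` (the preimage of the prime field `𝔽₂ ⊆
𝔽₄`, i.e. has idempotent image under `f : R → 𝔽₄`). -/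
def sl2UpperDivA (R : Type) [CommRing R] (f : R →+* GaloisField 2 2)
    (hf2 : f 2 = 0) : Subgroup (Matrix.SpecialLinearGroup (Fin 2) R) where
  carrier := {g | (2 : R) ∣ g.1 0 1 ∧ f (g.1 0 0) ^ 2 = f (g.1 0 0)}
  one_mem' := by
    constructor
    · simp only [Matrix.SpecialLinearGroup.coe_one]
      rw [Matrix.one_apply_ne (by decide)]
      exact dvd_zero 2
    · simp only [Matrix.SpecialLinearGroup.coe_one]
      rw [Matrix.one_apply_eq]
      simp
  mul_mem' := by
    rintro a b ⟨ha1, ha2⟩ ⟨hb1, hb2⟩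
    constructor
    · simp only [Matrix.SpecialLinearGroup.coe_mul]
      rw [Matrix.mul_apply, Fin.sum_univ_two]
      exact dvd_add (hb1.mul_left _) (ha1.mul_right _)
    · simp only [Matrix.SpecialLinearGroup.coe_mul]
      rw [Matrix.mul_apply, Fin.sum_univ_two]
      obtain ⟨y, hy⟩ := ha1
      have hzero : f (a.1 0 1 * b.1 1 0) = 0 := by
        rw [hy, _root_.map_mul, _root_.map_mul, hf2, zero_mul, zero_mul]
      rw [_root_.map_add, hzero, add_zero, _root_.map_mul, mul_pow, ha2, hb2]
  inv_mem' := by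
    rintro a ⟨ha1, ha2⟩
    have h : (a⁻¹).1 = adjugate a.1 := Matrix.SpecialLinearGroup.coe_inv a
    constructor
    · rw [h, Matrix.adjugate_fin_two]
      simpa using ha1.neg_right
    · rw [h, Matrix.adjugate_fin_two]
      simp only [Matrix.cons_val', Matrix.cons_val_zero, Matrix.cons_val_one,
        Matrix.head_cons, Matrix.head_fin_const, Matrix.empty_val',
        Matrix.cons_val_fin_one, Matrix.of_apply]
      -- the (0,0)-entry of the inverse is a.1 1 1
      have hdet : a.1 0 0 * a.1 1 1 - a.1 0 1 * a.1 1 0 = 1 := by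
        have := a.2
        rwa [Matrix.det_fin_two] at this
      obtain ⟨y, hy⟩ := ha1
      have h1 : f (a.1 0 0) * f (a.1 1 1) = 1 := by
        have := congrArg f hdet
        rw [_root_.map_sub, _root_.map_mul, _root_.map_mul, _root_.map_one, hy, _root_.map_mul, hf2, zero_mul,
          zero_mul, sub_zero] at this
        exact this
      have h00 : f (a.1 0 0) = 1 := by
        calc f (a.1 0 0) = f (a.1 0 0) ^ 2 * f (a.1 1 1) := by
              rw [sq, mul_assoc, h1, mul_one]
          _ = f (a.1 0 0) * f (a.1 1 1) := by rw [ha2]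
          _ = 1 := h1
      have h11 : f (a.1 1 1) = 1 := by
        rw [h00, one_mul] at h1; exact h1
      rw [h11]; norm_num

/-! Reducing modulo 2, the lower-left entry drops out of both the determinant and the upper-left
entry of a product, so `g ↦ a mod 2` is a homomorphism `(𝒪₄ ⊗ ℤ₂)¹ → (O_{F₂}/2)ˣ`. Its kernel
is `(𝒪₈ ⊗ ℤ₂)¹` because the only idempotent unit is `1`, and it is onto since any `a, d` with
`ad ≡ 1 (mod 2)` are the diagonal of `(a, ad - 1; 1, d) ∈ (𝒪₄ ⊗ ℤ₂)¹`. -/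

namespace sl2UpperDiv

variable {R : Type} [CommRing R] {S : Type*} [CommRing S] (f : R →+* S) (hf2 : f 2 = 0)

include hf2

theorem map_apply_zero_one (g : sl2UpperDiv R) : f (g.1.1 0 1) = 0 := by
  obtain ⟨y, hy⟩ := g.2
  rw [hy, map_mul, hf2, zero_mul]

theorem map_apply_zero_zero_mul_map_apply_one_one (g : sl2UpperDiv R) :
    f (g.1.1 0 0) * f (g.1.1 1 1) = 1 := by
  have hdet := congrArg f g.1.det_coe
  rwa [det_fin_two, map_sub, map_mul, map_mul, map_apply_zero_one f hf2, zero_mul, sub_zero,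
    map_one] at hdet

theorem map_mul_apply_zero_zero (g h : sl2UpperDiv R) :
    f ((g * h).1.1 0 0) = f (g.1.1 0 0) * f (h.1.1 0 0) := by
  change f ((g.1.1 * h.1.1) 0 0) = _
  rw [mul_apply, Fin.sum_univ_two, map_add, map_mul, map_mul, map_apply_zero_one f hf2, zero_mul,
    add_zero]

def topLeftUnit : sl2UpperDiv R →* Sˣ where
  toFun g := Units.mkOfMulEqOne _ _ (map_apply_zero_zero_mul_map_apply_one_one f hf2 g)
  map_one' := by ext; simp
  map_mul' g h := by ext; exact map_mul_apply_zero_zero f hf2 g h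

@[simp]
theorem coe_topLeftUnit_apply (g : sl2UpperDiv R) : (topLeftUnit f hf2 g : S) = f (g.1.1 0 0) :=
  rfl

theorem topLeftUnit_surjective (hsurj : Function.Surjective f)
    (hker : RingHom.ker f ≤ Ideal.span {(2 : R)}) : Function.Surjective (topLeftUnit f hf2) := by
  intro u
  obtain ⟨a, ha⟩ := hsurj u
  obtain ⟨d, hd⟩ := hsurj ↑u⁻¹
  have had : a * d - 1 ∈ Ideal.span {(2 : R)} := hker <| by simp [RingHom.mem_ker, ha, hd]
  obtain ⟨t, ht⟩ := Ideal.mem_span_singleton.mp had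
  have hdet : det !![a, 2 * t; 1, d] = 1 := by
    rw [det_fin_two_of]
    linear_combination ht
  exact ⟨⟨⟨!![a, 2 * t; 1, d], hdet⟩, ⟨t, rfl⟩⟩, Units.ext ha⟩

theorem mem_ker_topLeftUnit_iff (g : sl2UpperDiv R) :
    g ∈ (topLeftUnit f hf2).ker ↔ IsIdempotentElem (f (g.1.1 0 0)) := by
  have hunit : IsUnit (f (g.1.1 0 0)) := (topLeftUnit f hf2 g).isUnit
  rw [MonoidHom.mem_ker, ← Units.val_eq_one, coe_topLeftUnit_apply,
    IsIdempotentElem.iff_eq_one_of_isUnit hunit]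

end sl2UpperDiv

open sl2UpperDiv in
theorem stmt16_general
    (R : Type) [CommRing R]
    (f : R →+* GaloisField 2 2)
    (hfsurj : Function.Surjective f)
    (hker : RingHom.ker f = Ideal.span {(2 : R)})
    (hf2 : f 2 = 0) :
    ((sl2UpperDivA R f hf2).subgroupOf (sl2UpperDiv R)).Normal ∧
    ∃ θ : (sl2UpperDiv R) →* (GaloisField 2 2)ˣ,
      Function.Surjective θ ∧
      θ.ker = (sl2UpperDivA R f hf2).subgroupOf (sl2UpperDiv R) ∧
      ∀ g : (sl2UpperDiv R), ((θ g : (GaloisField 2 2)ˣ) : GaloisField 2 2) = f ((g : Matrix.SpecialLinearGroup (Fin 2) R).1 0 0) := by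
  have hkernel : (topLeftUnit f hf2).ker = (sl2UpperDivA R f hf2).subgroupOf (sl2UpperDiv R) := by
    ext g
    rw [mem_ker_topLeftUnit_iff, Subgroup.mem_subgroupOf, IsIdempotentElem, ← sq]
    exact ⟨fun h ↦ ⟨g.2, h⟩, And.right⟩
  exact ⟨hkernel ▸ (topLeftUnit f hf2).normal_ker, topLeftUnit f hf2,
    topLeftUnit_surjective f hf2 hfsurj hker.le, hkernel, coe_topLeftUnit_apply f hf2⟩

/-- Let `p ≡ 5 (mod 8)` (so `O_{F₂}/2O_{F₂} ≅ 𝔽₄`; `R = O_{F₂}`,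
`f : R → 𝔽₄` the reduction, `A₂ = ℤ₂[√p]` the preimage of `𝔽₂`).  Then
`(𝒪₈ ⊗ ℤ₂)¹` is a normal subgroup of `(𝒪₄ ⊗ ℤ₂)¹` and the quotient is isomorphic to
`𝔽₄ˣ` via `(a b; c d) ↦ a mod 2` (expressed via a surjective homomorphism to `𝔽₄ˣ`
with kernel `(𝒪₈ ⊗ ℤ₂)¹`). -/
theorem stmt16
    (p : ℕ) [Fact p.Prime] (hp8 : p % 8 = 5)
    (R : Type) [CommRing R]
    (f : R →+* GaloisField 2 2)
    (hfsurj : Function.Surjective f)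
    (hker : RingHom.ker f = Ideal.span {(2 : R)})
    (hf2 : f 2 = 0)
    (s : R) (hs : s ^ 2 = (p : R)) (hsf : f s ^ 2 = f s) :
    ((sl2UpperDivA R f hf2).subgroupOf (sl2UpperDiv R)).Normal ∧
    ∃ θ : (sl2UpperDiv R) →* (GaloisField 2 2)ˣ,
      Function.Surjective θ ∧
      θ.ker = (sl2UpperDivA R f hf2).subgroupOf (sl2UpperDiv R) ∧
      ∀ g : (sl2UpperDiv R), ((θ g : (GaloisField 2 2)ˣ) : GaloisField 2 2) = f ((g : Matrix.SpecialLinearGroup (Fin 2) R).1 0 0) :=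
  stmt16_general R f hfsurj hker hf2
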